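/- There is no fixed ε > 0 such that f_n(a) ≤ g_n(a) holds for all rational a with 0 ≤ a ≤ ε and all n ∈ ℕ. Precisely: for every real ε > 0 there exist n ∈ ℕ and a rational number a with 0 < a ≤ ε such that −n²·a + 1 > −(n+1)²·a + 2 (indeed f_n(a) − g_n(a) = (2n+1)·a − 1 > 0 whenever a > 1/(2n+1)). -/
import Mathlib


/-- There is no fixed `ε > 0` such that `f_n(a) ≤ g_n(a)` for all rational
`0 ≤ a ≤ ε` and all `n ∈ ℕ`: for every real `ε > 0` there exist `n ∈ ℕ` and a
rational `a` with `0 < a ≤ ε` such that `-n²·a + 1 > -(n+1)^2·a + 2`. -/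
theorem no_uniform_epsilon (ε : ℝ) (hε : 0 < ε) :
    ∃ (n : ℕ) (a : ℚ), 0 < a ∧ (a : ℝ) ≤ ε ∧
      -(n : ℚ) ^ 2 * a + 1 > -((n : ℚ) + 1) ^ 2 * a + 2 := by
  obtain ⟨q, hq0, hqε⟩ := exists_rat_btwn hε
  have hq0' : (0 : ℚ) < q := by exact_mod_cast hq0
  obtain ⟨n, hn⟩ := exists_nat_gt (1 / q)
  refine ⟨n, q, hq0', hqε.le, ?_⟩
  have h1 : (1 : ℚ) < n * q := by
    rw [div_lt_iff₀ hq0'] at hn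
    exact hn
  have h2 : (n : ℚ) * q ≤ (2 * n + 1) * q := by
    apply mul_le_mul_of_nonneg_right _ hq0'.le
    nlinarith [Nat.cast_nonneg (α := ℚ) n]
  nlinarith
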